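/- arXiv:math/0601318 — 4 statements merged into one kernel-verified Lean document; each statement's English description precedes it below -/
import Mathlib

section
/- Let f : ℝ → ℝ be a convex function which is monotone (either nondecreasing on all of ℝ or nonincreasing on all of ℝ), let A be an n×n Hermitian complex matrix, and let Z be an n×k complex matrix which is an isometry (Zᴴ Z = I_k). Then for every k' = 1, …, k, λ_{k'}(f(Zᴴ A Z)) ≤ λ_{k'}(Zᴴ f(A) Z); equivalently, there exists a k×k unitary matrix U such that f(Zᴴ A Z) ≤ U (Zᴴ f(A) Z) Uᴴ in the Loewner order. -/
open Matrix
open scoped ComplexOrder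

/-- The `j`-th largest eigenvalue of a Hermitian matrix (`0`-indexed, so `eigDesc hA ⟨0, _⟩`
is the largest), counted with multiplicity. -/
noncomputable def eigDesc {n : ℕ} {A : Matrix (Fin n) (Fin n) ℂ} (hA : A.IsHermitian)
    (j : Fin n) : ℝ :=
  hA.eigenvalues (Tuple.sort hA.eigenvalues j.rev)

/-- Applying a real function to a Hermitian matrix via the functional calculus yields a
Hermitian matrix. -/
lemma isHermitian_cfc {n : ℕ} {A : Matrix (Fin n) (Fin n) ℂ} (hA : A.IsHermitian)
    (f : ℝ → ℝ) : (hA.cfc f).IsHermitian := by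
  rw [← hA.cfc_eq]
  exact cfc_predicate f A

lemma isHermitian_half_smul {n : ℕ} {X : Matrix (Fin n) (Fin n) ℂ} (hX : X.IsHermitian) :
    ((2 : ℝ)⁻¹ • X).IsHermitian := by
  show _ = _
  rw [Matrix.conjTranspose_smul, star_trivial, hX.eq]

lemma isHermitian_sum_conj {m n : ℕ} {A : Fin m → Matrix (Fin n) (Fin n) ℂ}
    (Z : Fin m → Matrix (Fin n) (Fin n) ℂ) (hA : ∀ i, (A i).IsHermitian) :
    (∑ i, (Z i)ᴴ * A i * Z i).IsHermitian := by
  show _ = _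
  rw [Matrix.conjTranspose_sum]
  exact Finset.sum_congr rfl fun i _ => (isHermitian_conjTranspose_mul_mul (Z i) (hA i)).eq

open scoped InnerProductSpace

/-!
Put `B = Zᴴ A Z` and `c = λⱼ(f(B))`. At least `j + 1` eigenvalues `μ` of `B` satisfy `c ≤ f(μ)`;
let `S` be the span of their eigenvectors. For a unit vector `v ∈ S`, `⟪v, B v⟫` is a convex
combination of these `μ`, and the superlevel set `{x | c ≤ f x}` of a monotone `f` is an interval,
so `c ≤ f ⟪v, B v⟫ = f ⟪Z v, A (Z v)⟫ ≤ ⟪Z v, f(A) (Z v)⟫ = ⟪v, Zᴴ f(A) Z v⟫`, the middle step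
being Jensen's inequality for the weights `‖⟪bᵢ, Z v⟫‖²` of the unit vector `Z v` in an eigenbasis
of `A`. By Courant–Fischer, a bound on the `(j + 1)`-dimensional space `S` gives
`c ≤ λⱼ(Zᴴ f(A) Z)`. The unitary is then the one carrying the eigenvectors of `Zᴴ f(A) Z` onto
those of `f(B)`, matched in decreasing order of eigenvalues.
-/

lemma Submodule.exists_mem_inf_ne_zero_of_finrank_lt {K V : Type*} [DivisionRing K]
    [AddCommGroup V] [Module K V] [FiniteDimensional K V] {S T : Submodule K V}
    (h : Module.finrank K V < Module.finrank K S + Module.finrank K T) :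
    ∃ v ∈ S ⊓ T, v ≠ 0 := by
  have hsup := (S ⊔ T).finrank_le
  have hinf : Module.finrank K ↥(S ⊓ T) ≠ 0 := by
    have := Submodule.finrank_sup_add_finrank_inf_eq S T
    omega
  exact Submodule.exists_mem_ne_zero_of_ne_bot (mt Submodule.finrank_eq_zero.mpr hinf)

namespace OrthonormalBasis

variable {𝕜 E ι : Type*} [RCLike 𝕜] [NormedAddCommGroup E] [InnerProductSpace 𝕜 E] [Fintype ι]
  (b : OrthonormalBasis ι 𝕜 E)

lemma finrank_span_image (s : Finset ι) :
    Module.finrank 𝕜 (Submodule.span 𝕜 (b '' s)) = s.card := by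
  have := finrank_span_eq_card (b.orthonormal.linearIndependent.comp _
    (Subtype.val_injective (p := (· ∈ s))))
  rwa [Set.range_comp, Subtype.range_coe_subtype, Fintype.card_coe] at this

lemma inner_eq_zero_of_mem_span_image {s : Set ι} {v : E}
    (hv : v ∈ Submodule.span 𝕜 (b '' s)) {i : ι} (hi : i ∉ s) : ⟪b i, v⟫_𝕜 = 0 := by
  have : Submodule.span 𝕜 (b '' s) ≤ LinearMap.ker (innerₛₗ 𝕜 (b i)) := by
    rw [Submodule.span_le]
    rintro - ⟨j, hj, rfl⟩
    exact b.orthonormal.inner_eq_zero (ne_of_mem_of_not_mem hj hi).symm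
  exact this hv

variable {T : E →ₗ[𝕜] E} {d : ι → ℝ} {s : Finset ι} {v : E} {c : ℝ}

lemma re_inner_map_self_eq_sum (hT : ∀ i, T (b i) = (d i : 𝕜) • b i) (v : E) :
    RCLike.re ⟪v, T v⟫_𝕜 = ∑ i, d i * ‖⟪b i, v⟫_𝕜‖ ^ 2 := by
  have hTv : T v = ∑ i, (⟪b i, v⟫_𝕜 * d i) • b i := by
    conv_lhs => rw [← b.sum_repr' v]
    simp only [map_sum, map_smul, hT, smul_smul]
  rw [hTv, inner_sum, map_sum]
  refine Finset.sum_congr rfl fun i _ => ?_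
  rw [inner_smul_right, ← inner_conj_symm v (b i), mul_right_comm, RCLike.mul_conj]
  norm_cast
  simp [mul_comm]

lemma re_inner_map_self_eq_sum_of_mem_span (hT : ∀ i, T (b i) = (d i : 𝕜) • b i)
    (hv : v ∈ Submodule.span 𝕜 (b '' s)) :
    RCLike.re ⟪v, T v⟫_𝕜 = ∑ i ∈ s, d i * ‖⟪b i, v⟫_𝕜‖ ^ 2 := by
  rw [b.re_inner_map_self_eq_sum hT, Finset.sum_subset (Finset.subset_univ s)]
  intro i _ hi
  rw [b.inner_eq_zero_of_mem_span_image hv hi, norm_zero]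
  ring

lemma norm_sq_eq_sum_of_mem_span (hv : v ∈ Submodule.span 𝕜 (b '' s)) :
    ‖v‖ ^ 2 = ∑ i ∈ s, ‖⟪b i, v⟫_𝕜‖ ^ 2 := by
  simpa using b.re_inner_map_self_eq_sum_of_mem_span (T := LinearMap.id) (d := 1) (by simp) hv

lemma mul_norm_sq_le_re_inner_map_self (hT : ∀ i, T (b i) = (d i : 𝕜) • b i)
    (hs : ∀ i ∈ s, c ≤ d i) (hv : v ∈ Submodule.span 𝕜 (b '' s)) :
    c * ‖v‖ ^ 2 ≤ RCLike.re ⟪v, T v⟫_𝕜 := by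
  rw [b.norm_sq_eq_sum_of_mem_span hv, b.re_inner_map_self_eq_sum_of_mem_span hT hv,
    Finset.mul_sum]
  exact Finset.sum_le_sum fun i hi => by gcongr; exact hs i hi

lemma re_inner_map_self_le_mul_norm_sq (hT : ∀ i, T (b i) = (d i : 𝕜) • b i)
    (hs : ∀ i ∈ s, d i ≤ c) (hv : v ∈ Submodule.span 𝕜 (b '' s)) :
    RCLike.re ⟪v, T v⟫_𝕜 ≤ c * ‖v‖ ^ 2 := by
  rw [b.norm_sq_eq_sum_of_mem_span hv, b.re_inner_map_self_eq_sum_of_mem_span hT hv,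
    Finset.mul_sum]
  exact Finset.sum_le_sum fun i hi => by gcongr; exact hs i hi

lemma re_inner_map_self_lt_mul_norm_sq (hT : ∀ i, T (b i) = (d i : 𝕜) • b i)
    (hs : ∀ i ∈ s, d i < c) (hv : v ∈ Submodule.span 𝕜 (b '' s)) (hv0 : v ≠ 0) :
    RCLike.re ⟪v, T v⟫_𝕜 < c * ‖v‖ ^ 2 := by
  obtain ⟨i, hi, hbv⟩ : ∃ i ∈ s, ⟪b i, v⟫_𝕜 ≠ 0 := by
    by_contra! h
    have hnorm := b.norm_sq_eq_sum_of_mem_span hv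
    rw [Finset.sum_eq_zero fun i hi => by rw [h i hi, norm_zero, sq, mul_zero]] at hnorm
    exact hv0 (by simpa using hnorm)
  rw [b.norm_sq_eq_sum_of_mem_span hv, b.re_inner_map_self_eq_sum_of_mem_span hT hv,
    Finset.mul_sum]
  refine Finset.sum_lt_sum (fun i hi => ?_) ⟨i, hi, ?_⟩
  · gcongr; exact (hs i hi).le
  · gcongr; exact hs i hi

lemma map_re_inner_map_self_le_of_convexOn {f : ℝ → ℝ} (hf : ConvexOn ℝ Set.univ f)
    {T' : E →ₗ[𝕜] E} (hT : ∀ i, T (b i) = (d i : 𝕜) • b i)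
    (hT' : ∀ i, T' (b i) = (f (d i) : 𝕜) • b i) (hv : ‖v‖ = 1) :
    f (RCLike.re ⟪v, T v⟫_𝕜) ≤ RCLike.re ⟪v, T' v⟫_𝕜 := by
  have hw : ∑ i, ‖⟪b i, v⟫_𝕜‖ ^ 2 = 1 := by rw [b.sum_sq_norm_inner_right, hv, one_pow]
  have := hf.map_sum_le (fun i _ => by positivity) hw fun i _ => Set.mem_univ (d i)
  rw [b.re_inner_map_self_eq_sum hT, b.re_inner_map_self_eq_sum hT']
  simpa only [smul_eq_mul, mul_comm] using this

lemma le_map_re_inner_map_self_of_mem_span {f : ℝ → ℝ} (hf : Monotone f ∨ Antitone f)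
    (hT : ∀ i, T (b i) = (d i : 𝕜) • b i) (hs : ∀ i ∈ s, c ≤ f (d i))
    (hv : v ∈ Submodule.span 𝕜 (b '' s)) (hv1 : ‖v‖ = 1) :
    c ≤ f (RCLike.re ⟪v, T v⟫_𝕜) := by
  have hconv : Convex ℝ {x | c ≤ f x} := Set.OrdConnected.convex
    ⟨fun x hx y hy z hz => hf.elim (fun hm => hx.trans (hm hz.1)) fun ha => hy.trans (ha hz.2)⟩
  have hw : ∑ i ∈ s, ‖⟪b i, v⟫_𝕜‖ ^ 2 = 1 := by
    rw [← b.norm_sq_eq_sum_of_mem_span hv, hv1, one_pow]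
  rw [b.re_inner_map_self_eq_sum_of_mem_span hT hv]
  simpa only [smul_eq_mul, mul_comm, Set.mem_ofPred_eq] using
    hconv.sum_mem (fun i _ => by positivity) hw hs

end OrthonormalBasis

namespace Matrix

lemma submatrix_mul_mul_conjTranspose {α n : Type*} [Fintype n] [NonUnitalSemiring α]
    [StarRing α] (M N : Matrix n n α) (e : Equiv.Perm n) :
    M.submatrix e id * N * (M.submatrix e id)ᴴ = (M * N * Mᴴ).submatrix e e := by
  rw [conjTranspose_submatrix]
  exact (congrArg (· * _) (submatrix_mul_equiv M N e (.refl n) id)).trans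
    (submatrix_mul_equiv (M * N) Mᴴ e (.refl n) e)

variable {𝕜 m n : Type*} [RCLike 𝕜] [Fintype m] [DecidableEq m] [Fintype n] [DecidableEq n]

lemma inner_toEuclideanLin_conjTranspose_mul_mul (Z : Matrix m n 𝕜) (N : Matrix m m 𝕜)
    (v : EuclideanSpace 𝕜 n) :
    ⟪v, toEuclideanLin (Zᴴ * N * Z) v⟫_𝕜 =
      ⟪toEuclideanLin Z v, toEuclideanLin N (toEuclideanLin Z v)⟫_𝕜 := by
  rw [toLpLin_mul_same, toLpLin_mul_same, toEuclideanLin_conjTranspose_eq_adjoint,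
    LinearMap.comp_apply, LinearMap.comp_apply, LinearMap.adjoint_inner_right]

lemma norm_toEuclideanLin_of_conjTranspose_mul_self {Z : Matrix m n 𝕜} (hZ : Zᴴ * Z = 1)
    (v : EuclideanSpace 𝕜 n) : ‖toEuclideanLin Z v‖ = ‖v‖ := by
  have := Z.inner_toEuclideanLin_conjTranspose_mul_mul 1 v
  rw [Matrix.mul_one, hZ, toLpLin_one, LinearMap.id_apply, toLpLin_one, LinearMap.id_apply] at this
  rw [@norm_eq_sqrt_re_inner 𝕜, @norm_eq_sqrt_re_inner 𝕜 _ _ _ _ v, this]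

namespace IsHermitian

variable {M : Matrix n n 𝕜}

lemma toEuclideanLin_eigenvectorBasis (hM : M.IsHermitian) (i : n) :
    toEuclideanLin M (hM.eigenvectorBasis i) = (hM.eigenvalues i : 𝕜) • hM.eigenvectorBasis i := by
  apply WithLp.ofLp_injective 2
  rw [toLpLin_apply, hM.mulVec_eigenvectorBasis]
  ext j
  simp [RCLike.real_smul_eq_coe_mul]

lemma toEuclideanLin_cfc_eigenvectorBasis (hM : M.IsHermitian) (f : ℝ → ℝ) (i : n) :
    toEuclideanLin (hM.cfc f) (hM.eigenvectorBasis i) =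
      (f (hM.eigenvalues i) : 𝕜) • hM.eigenvectorBasis i := by
  apply WithLp.ofLp_injective 2
  rw [toLpLin_apply, IsHermitian.cfc, Unitary.conjStarAlgAut_apply, ← mulVec_mulVec,
    ← mulVec_mulVec, hM.star_eigenvectorUnitary_mulVec, diagonal_mulVec_single]
  ext j
  simp [mul_comm, RCLike.real_smul_eq_coe_mul]

lemma star_eigenvectorUnitary_mul_mul (hM : M.IsHermitian) :
    star (hM.eigenvectorUnitary : Matrix n n 𝕜) * M * (hM.eigenvectorUnitary : Matrix n n 𝕜) =
      diagonal (RCLike.ofReal ∘ hM.eigenvalues) := by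
  rw [← hM.conjStarAlgAut_star_eigenvectorUnitary, Unitary.conjStarAlgAut_apply,
    Unitary.coe_star, star_star]

lemma exists_unitary_posSemidef_sub_of_eigenvalues_le {X Y : Matrix n n 𝕜} (hX : X.IsHermitian)
    (hY : Y.IsHermitian) (e : Equiv.Perm n) (h : ∀ i, hX.eigenvalues i ≤ hY.eigenvalues (e i)) :
    ∃ U ∈ unitaryGroup n 𝕜, (U * Y * Uᴴ - X).PosSemidef := by
  set V : Matrix n n 𝕜 := (hX.eigenvectorUnitary : Matrix n n 𝕜)
  set W : Matrix n n 𝕜 := (hY.eigenvectorUnitary : Matrix n n 𝕜)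
  set P := (star W).submatrix e id
  have hP : P ∈ unitaryGroup n 𝕜 := by
    rw [mem_unitaryGroup_iff, star_eq_conjTranspose]
    calc P * Pᴴ = P * 1 * Pᴴ := by rw [Matrix.mul_one]
      _ = (star W * 1 * (star W)ᴴ).submatrix e e := submatrix_mul_mul_conjTranspose _ _ _
      _ = 1 := by
        rw [Matrix.mul_one, ← star_eq_conjTranspose, star_star, Unitary.coe_star_mul_self,
          submatrix_one_equiv]
  have hPY : P * Y * Pᴴ = diagonal (RCLike.ofReal ∘ hY.eigenvalues ∘ e) := by
    rw [submatrix_mul_mul_conjTranspose, ← star_eq_conjTranspose, star_star,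
      hY.star_eigenvectorUnitary_mul_mul, submatrix_diagonal_equiv]
    rfl
  have hXV : X = V * diagonal (RCLike.ofReal ∘ hX.eigenvalues) * Vᴴ := by
    conv_lhs => rw [hX.spectral_theorem, Unitary.conjStarAlgAut_apply]
    rfl
  have hdiff : V * P * Y * (V * P)ᴴ - X =
      V * diagonal (fun i => ((hY.eigenvalues (e i) - hX.eigenvalues i : ℝ) : 𝕜)) * Vᴴ := by
    calc V * P * Y * (V * P)ᴴ - X = V * (P * Y * Pᴴ) * Vᴴ - X := by
          simp only [conjTranspose_mul, Matrix.mul_assoc]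
      _ = V * (diagonal (RCLike.ofReal ∘ hY.eigenvalues ∘ e) -
            diagonal (RCLike.ofReal ∘ hX.eigenvalues)) * Vᴴ := by
          rw [hPY, Matrix.mul_sub, Matrix.sub_mul, ← hXV]
      _ = _ := by
          rw [diagonal_sub]
          congr 3 with i
          simp
  refine ⟨V * P, Submonoid.mul_mem _ hX.eigenvectorUnitary.2 hP, hdiff ▸ ?_⟩
  refine (posSemidef_diagonal_iff.mpr fun i => ?_).mul_mul_conjTranspose_same V
  exact RCLike.ofReal_nonneg.mpr (sub_nonneg.mpr (h i))

end IsHermitian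

end Matrix

section eigDesc

variable {k : ℕ} {M : Matrix (Fin k) (Fin k) ℂ}

noncomputable def eigDescIndex (hM : M.IsHermitian) : Equiv.Perm (Fin k) :=
  Fin.revPerm.trans (Tuple.sort hM.eigenvalues)

lemma eigDesc_eq_eigenvalues (hM : M.IsHermitian) (j : Fin k) :
    eigDesc hM j = hM.eigenvalues (eigDescIndex hM j) := rfl

lemma eigenvalues_eq_eigDesc_symm (hM : M.IsHermitian) (i : Fin k) :
    hM.eigenvalues i = eigDesc hM ((eigDescIndex hM).symm i) := by
  rw [eigDesc_eq_eigenvalues, Equiv.apply_symm_apply]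

lemma eigDesc_antitone (hM : M.IsHermitian) : Antitone (eigDesc hM) := fun _ _ h =>
  Tuple.monotone_sort hM.eigenvalues (Fin.rev_le_rev.mpr h)

lemma exists_finrank_eq_forall_eigDesc_mul_le (hM : M.IsHermitian) (j : Fin k) :
    ∃ S : Submodule ℂ (EuclideanSpace ℂ (Fin k)), Module.finrank ℂ S = j + 1 ∧
      ∀ v ∈ S, eigDesc hM j * ‖v‖ ^ 2 ≤ RCLike.re ⟪v, toEuclideanLin M v⟫_ℂ := by
  let s := (Finset.Iic j).map (eigDescIndex hM).toEmbedding
  have hs : ∀ i ∈ s, eigDesc hM j ≤ hM.eigenvalues i := by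
    intro i hi
    rw [Finset.mem_map_equiv, Finset.mem_Iic] at hi
    rw [eigenvalues_eq_eigDesc_symm]
    exact eigDesc_antitone hM hi
  refine ⟨_, ?_, fun v => hM.eigenvectorBasis.mul_norm_sq_le_re_inner_map_self
    hM.toEuclideanLin_eigenvectorBasis hs⟩
  rw [hM.eigenvectorBasis.finrank_span_image, Finset.card_map, Fin.card_Iic]

lemma exists_finrank_eq_forall_le_eigDesc_mul (hM : M.IsHermitian) (j : Fin k) :
    ∃ S : Submodule ℂ (EuclideanSpace ℂ (Fin k)), Module.finrank ℂ S = k - j ∧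
      ∀ v ∈ S, RCLike.re ⟪v, toEuclideanLin M v⟫_ℂ ≤ eigDesc hM j * ‖v‖ ^ 2 := by
  let s := (Finset.Ici j).map (eigDescIndex hM).toEmbedding
  have hs : ∀ i ∈ s, hM.eigenvalues i ≤ eigDesc hM j := by
    intro i hi
    rw [Finset.mem_map_equiv, Finset.mem_Ici] at hi
    rw [eigenvalues_eq_eigDesc_symm]
    exact eigDesc_antitone hM hi
  refine ⟨_, ?_, fun v => hM.eigenvectorBasis.re_inner_map_self_le_mul_norm_sq
    hM.toEuclideanLin_eigenvectorBasis hs⟩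
  rw [hM.eigenvectorBasis.finrank_span_image, Finset.card_map, Fin.card_Ici]

lemma le_eigDesc_of_forall_le_re_inner (hM : M.IsHermitian) (j : Fin k)
    (S : Submodule ℂ (EuclideanSpace ℂ (Fin k))) (hS : j + 1 ≤ Module.finrank ℂ S) {c : ℝ}
    (h : ∀ v ∈ S, ‖v‖ = 1 → c ≤ RCLike.re ⟪v, toEuclideanLin M v⟫_ℂ) :
    c ≤ eigDesc hM j := by
  obtain ⟨B, hB, hBle⟩ := exists_finrank_eq_forall_le_eigDesc_mul hM j
  obtain ⟨v, hv, hv0⟩ := Submodule.exists_mem_inf_ne_zero_of_finrank_lt (S := S) (T := B) (by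
    rw [finrank_euclideanSpace_fin, hB]
    omega)
  have hw : ‖(‖v‖⁻¹ : ℂ) • v‖ = 1 := norm_smul_inv_norm hv0
  have hwSB : (‖v‖⁻¹ : ℂ) • v ∈ S ⊓ B := Submodule.smul_mem _ _ hv
  calc c ≤ RCLike.re ⟪(‖v‖⁻¹ : ℂ) • v, toEuclideanLin M ((‖v‖⁻¹ : ℂ) • v)⟫_ℂ := h _ hwSB.1 hw
    _ ≤ eigDesc hM j * ‖(‖v‖⁻¹ : ℂ) • v‖ ^ 2 := hBle _ hwSB.2
    _ = eigDesc hM j := by rw [hw, one_pow, mul_one]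

lemma le_card_filter_eigDesc_le (hM : M.IsHermitian)
    {u : OrthonormalBasis (Fin k) ℂ (EuclideanSpace ℂ (Fin k))} {d : Fin k → ℝ}
    (hu : ∀ i, toEuclideanLin M (u i) = (d i : ℂ) • u i) (j : Fin k) :
    j + 1 ≤ (Finset.univ.filter fun i => eigDesc hM j ≤ d i).card := by
  by_contra! hlt
  have hcard := Finset.card_filter_add_card_filter_not (s := Finset.univ)
    fun i => eigDesc hM j ≤ d i
  rw [Finset.card_univ, Fintype.card_fin] at hcard
  obtain ⟨T, hT, hTle⟩ := exists_finrank_eq_forall_eigDesc_mul_le hM j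
  obtain ⟨v, hv, hv0⟩ := Submodule.exists_mem_inf_ne_zero_of_finrank_lt
    (S := Submodule.span ℂ (u '' (Finset.univ.filter fun i => ¬ eigDesc hM j ≤ d i)))
    (T := T) (by
      rw [finrank_euclideanSpace_fin, u.finrank_span_image, hT]
      omega)
  have := u.re_inner_map_self_lt_mul_norm_sq hu
    (fun i hi => not_le.mp (Finset.mem_filter.mp hi).2) hv.1 hv0
  linarith [hTle v hv.2]

lemma exists_unitary_posSemidef_sub_of_eigDesc_le {X Y : Matrix (Fin k) (Fin k) ℂ}
    (hX : X.IsHermitian) (hY : Y.IsHermitian) (h : ∀ j, eigDesc hX j ≤ eigDesc hY j) :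
    ∃ U ∈ unitaryGroup (Fin k) ℂ, (U * Y * Uᴴ - X).PosSemidef :=
  hX.exists_unitary_posSemidef_sub_of_eigenvalues_le hY
    ((eigDescIndex hX).symm.trans (eigDescIndex hY))
    fun i => (eigenvalues_eq_eigDesc_symm hX i).trans_le (h _)

lemma eigDesc_cfc_conjTranspose_mul_mul_le {n : ℕ} {f : ℝ → ℝ} (hf : ConvexOn ℝ Set.univ f)
    (hmono : Monotone f ∨ Antitone f) {A : Matrix (Fin n) (Fin n) ℂ} (hA : A.IsHermitian)
    {Z : Matrix (Fin n) (Fin k) ℂ} (hZ : Zᴴ * Z = 1) (j : Fin k) :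
    eigDesc (isHermitian_cfc (isHermitian_conjTranspose_mul_mul Z hA) f) j ≤
      eigDesc (isHermitian_conjTranspose_mul_mul Z (isHermitian_cfc hA f)) j := by
  have hB := isHermitian_conjTranspose_mul_mul Z hA
  let s := Finset.univ.filter fun i => eigDesc (isHermitian_cfc hB f) j ≤ f (hB.eigenvalues i)
  have hs : j + 1 ≤ s.card :=
    le_card_filter_eigDesc_le _ (hB.toEuclideanLin_cfc_eigenvectorBasis f) j
  refine le_eigDesc_of_forall_le_re_inner _ j (Submodule.span ℂ (hB.eigenvectorBasis '' s))
    (by rwa [hB.eigenvectorBasis.finrank_span_image]) fun v hv hv1 => ?_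
  calc eigDesc (isHermitian_cfc hB f) j
      ≤ f (RCLike.re ⟪v, toEuclideanLin (Zᴴ * A * Z) v⟫_ℂ) :=
        hB.eigenvectorBasis.le_map_re_inner_map_self_of_mem_span hmono
          hB.toEuclideanLin_eigenvectorBasis (fun i hi => (Finset.mem_filter.mp hi).2) hv hv1
    _ = f (RCLike.re ⟪toEuclideanLin Z v, toEuclideanLin A (toEuclideanLin Z v)⟫_ℂ) := by
        rw [inner_toEuclideanLin_conjTranspose_mul_mul]
    _ ≤ RCLike.re ⟪toEuclideanLin Z v, toEuclideanLin (hA.cfc f) (toEuclideanLin Z v)⟫_ℂ :=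
        hA.eigenvectorBasis.map_re_inner_map_self_le_of_convexOn hf
          hA.toEuclideanLin_eigenvectorBasis (hA.toEuclideanLin_cfc_eigenvectorBasis f)
          ((norm_toEuclideanLin_of_conjTranspose_mul_self hZ v).trans hv1)
    _ = RCLike.re ⟪v, toEuclideanLin (Zᴴ * hA.cfc f * Z) v⟫_ℂ := by
        rw [inner_toEuclideanLin_conjTranspose_mul_mul]

end eigDesc

/-- **Inequality (4) of Bourin.** If `f` is convex and monotone, `A` is Hermitian and `Z`
is an isometry, then `λ_{k'}(f(Zᴴ A Z)) ≤ λ_{k'}(Zᴴ f(A) Z)` for every `k'`;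
equivalently, there is a unitary `U` with `f(Zᴴ A Z) ≤ U (Zᴴ f(A) Z) Uᴴ`. -/
theorem cfc_compression_le_unitary_conj_of_monotone
    {n k : ℕ} (f : ℝ → ℝ) (hf : ConvexOn ℝ Set.univ f)
    (hmono : Monotone f ∨ Antitone f)
    (A : Matrix (Fin n) (Fin n) ℂ) (hA : A.IsHermitian)
    (Z : Matrix (Fin n) (Fin k) ℂ) (hZ : Zᴴ * Z = 1) :
    (∀ k' : Fin k,
      eigDesc (isHermitian_cfc (isHermitian_conjTranspose_mul_mul Z hA) f) k' ≤
        eigDesc (isHermitian_conjTranspose_mul_mul Z (isHermitian_cfc hA f)) k') ∧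
    ∃ U : Matrix (Fin k) (Fin k) ℂ, U ∈ Matrix.unitaryGroup (Fin k) ℂ ∧
      (U * (Zᴴ * hA.cfc f * Z) * Uᴴ -
        (isHermitian_conjTranspose_mul_mul Z hA).cfc f).PosSemidef := by
  have hle := fun j => eigDesc_cfc_conjTranspose_mul_mul_le hf hmono hA hZ j
  exact ⟨hle, exists_unitary_posSemidef_sub_of_eigDesc_le _ _ hle⟩
end

section
/- Let A be an n×n Hermitian complex matrix, let f : ℝ → ℝ be a convex function, and let h ∈ ℂⁿ be a unit vector (‖h‖ = 1). Then f(⟨h, A h⟩) ≤ ⟨h, f(A) h⟩, where ⟨h, A h⟩ denotes the (real) quadratic form value hᴴ A h. -/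
/-!
Diagonalize `A = U D Uᴴ` with `U` unitary and `D` the real diagonal of eigenvalues `λᵢ`; then
`f(A) = U f(D) Uᴴ`. With `g = Uᴴ h`, both quadratic forms become weighted sums
`⟨h, A h⟩ = ∑ |gᵢ|² λᵢ` and `⟨h, f(A) h⟩ = ∑ |gᵢ|² f(λᵢ)`, and the weights `|gᵢ|²` sum to
`‖h‖² = 1` because `U` is unitary. The inequality is then the finite Jensen inequality.
-/

open Matrix

namespace Matrix

variable {𝕜 n : Type*} [RCLike 𝕜] [Fintype n]

lemma star_dotProduct_conj_mulVec (U M : Matrix n n 𝕜) (h : n → 𝕜) :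
    star h ⬝ᵥ (U * M * star U) *ᵥ h = star (star U *ᵥ h) ⬝ᵥ M *ᵥ (star U *ᵥ h) := by
  rw [← mulVec_mulVec, ← mulVec_mulVec, dotProduct_mulVec, star_mulVec,
    star_eq_conjTranspose, conjTranspose_conjTranspose]

lemma re_star_dotProduct_diagonal_mulVec [DecidableEq n] (d : n → ℝ) (g : n → 𝕜) :
    RCLike.re (star g ⬝ᵥ diagonal (RCLike.ofReal ∘ d) *ᵥ g) = ∑ i, d i * ‖g i‖ ^ 2 := by
  simp only [dotProduct, mulVec_diagonal, Function.comp_apply, Pi.star_apply, map_sum]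
  refine Finset.sum_congr rfl fun i _ => ?_
  rw [mul_left_comm, RCLike.star_def, RCLike.conj_mul, ← RCLike.ofReal_pow, ← RCLike.ofReal_mul,
    RCLike.ofReal_re]

lemma sum_norm_sq_star_mulVec_of_mem_unitaryGroup [DecidableEq n] {U : Matrix n n 𝕜}
    (hU : U ∈ unitaryGroup n 𝕜) (h : n → 𝕜) :
    ∑ i, ‖(star U *ᵥ h) i‖ ^ 2 = ∑ i, ‖h i‖ ^ 2 := by
  have re_self (v : n → 𝕜) : RCLike.re (star v ⬝ᵥ v) = ∑ i, ‖v i‖ ^ 2 := by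
    simpa using re_star_dotProduct_diagonal_mulVec 1 v
  have conj_one := star_dotProduct_conj_mulVec U 1 h
  rw [mul_one, mem_unitaryGroup_iff.mp hU, one_mulVec, one_mulVec] at conj_one
  rw [← re_self, ← re_self, conj_one]

namespace IsHermitian

variable [DecidableEq n] {A : Matrix n n 𝕜} (hA : A.IsHermitian)

lemma cfc_id : hA.cfc id = A := hA.spectral_theorem.symm

lemma re_star_dotProduct_cfc_mulVec (f : ℝ → ℝ) (h : n → 𝕜) :
    RCLike.re (star h ⬝ᵥ hA.cfc f *ᵥ h) =
      ∑ i, f (hA.eigenvalues i) * ‖(star (hA.eigenvectorUnitary : Matrix n n 𝕜) *ᵥ h) i‖ ^ 2 := by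
  rw [IsHermitian.cfc, Unitary.conjStarAlgAut_apply, star_dotProduct_conj_mulVec]
  exact re_star_dotProduct_diagonal_mulVec (f ∘ hA.eigenvalues) _

end IsHermitian

end Matrix

/-- **Jensen inequality for quadratic forms.** If `A` is Hermitian, `f` is convex and
`h` is a unit vector, then `f(⟨h, A h⟩) ≤ ⟨h, f(A) h⟩`. -/
theorem cfc_quadratic_form_jensen
    {n : ℕ} (A : Matrix (Fin n) (Fin n) ℂ) (hA : A.IsHermitian)
    (f : ℝ → ℝ) (hf : ConvexOn ℝ Set.univ f)
    (h : Fin n → ℂ) (hh : ∑ i, ‖h i‖ ^ 2 = 1) :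
    f (star h ⬝ᵥ A.mulVec h).re ≤ (star h ⬝ᵥ (hA.cfc f).mulVec h).re := by
  set w := fun i => ‖(star (hA.eigenvectorUnitary : Matrix (Fin n) (Fin n) ℂ) *ᵥ h) i‖ ^ 2
  have hw : ∑ i, w i = 1 :=
    (sum_norm_sq_star_mulVec_of_mem_unitaryGroup hA.eigenvectorUnitary.2 h).trans hh
  have hA_form : (star h ⬝ᵥ A *ᵥ h).re = ∑ i, w i • hA.eigenvalues i := by
    simpa [hA.cfc_id, mul_comm] using hA.re_star_dotProduct_cfc_mulVec id h
  have hfA_form : (star h ⬝ᵥ hA.cfc f *ᵥ h).re = ∑ i, w i • f (hA.eigenvalues i) := by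
    simpa [mul_comm] using hA.re_star_dotProduct_cfc_mulVec f h
  rw [hA_form, hfA_form]
  exact hf.map_sum_le (fun i _ => by positivity) hw (fun i _ => Set.mem_univ (hA.eigenvalues i))
end

section
/- Let f : ℝ → ℝ be a convex function and let A, B be n×n Hermitian complex matrices. Then Tr f((A+B)/2) ≤ Tr ((f(A)+f(B))/2). -/
open Matrix

open scoped ComplexOrder

/-!
Let `U` be a unitary diagonalising `C = (A + B) / 2`. The eigenvalues of `C` are the diagonal
entries of `Uᴴ C U`, i.e. the averages of the diagonal entries of `Uᴴ A U` and `Uᴴ B U`, so by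
convexity of `f` it suffices to prove Peierls' inequality `∑ i, f ((Uᴴ A U) i i) ≤ Tr f(A)`.
Writing `A = V D Vᴴ`, the diagonal of `Uᴴ A U` is the image of the eigenvalue vector of `A` under
the matrix `(‖W i j‖ ^ 2)` with `W = Uᴴ V` unitary; this matrix is doubly stochastic, and Jensen's
inequality applied to each of its rows gives the bound.
-/

section

variable {𝕜 : Type*} [RCLike 𝕜] {n : Type*} [Fintype n] [DecidableEq n]

theorem ConvexOn.sum_map_mulVec_le {s : Set ℝ} {f : ℝ → ℝ} (hf : ConvexOn ℝ s f)
    {M : Matrix n n ℝ} (hM : M ∈ doublyStochastic ℝ n) {x : n → ℝ} (hx : ∀ i, x i ∈ s) :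
    ∑ i, f ((M *ᵥ x) i) ≤ ∑ i, f (x i) :=
  calc ∑ i, f ((M *ᵥ x) i)
      ≤ ∑ i, ∑ j, M i j * f (x j) := Finset.sum_le_sum fun i _ =>
        hf.map_sum_le (fun j _ => nonneg_of_mem_doublyStochastic hM)
          (sum_row_of_mem_doublyStochastic hM i) fun j _ => hx j
    _ = ∑ i, f (x i) := by
        rw [Finset.sum_comm]
        simp only [← Finset.sum_mul, sum_col_of_mem_doublyStochastic hM, one_mul]

namespace Matrix

def normSqEntries (W : Matrix n n 𝕜) : Matrix n n ℝ :=
  of fun i j => ‖W i j‖ ^ 2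

lemma normSqEntries_mem_doublyStochastic {W : Matrix n n 𝕜} (hW : W ∈ unitaryGroup n 𝕜) :
    normSqEntries W ∈ doublyStochastic ℝ n := by
  have hrow i : ∑ j, (‖W i j‖ ^ 2 : 𝕜) = 1 := by
    simpa [mul_apply, RCLike.mul_conj] using congr_fun₂ (mem_unitaryGroup_iff.mp hW) i i
  have hcol j : ∑ i, (‖W i j‖ ^ 2 : 𝕜) = 1 := by
    simpa [mul_apply, RCLike.conj_mul] using congr_fun₂ (mem_unitaryGroup_iff'.mp hW) j j
  refine mem_doublyStochastic_iff_sum.mpr ⟨fun i j => sq_nonneg _, fun i => ?_, fun j => ?_⟩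
  · exact_mod_cast hrow i
  · exact_mod_cast hcol j

lemma re_mul_diagonal_mul_star_apply_self (W : Matrix n n 𝕜) (d : n → ℝ) (i : n) :
    RCLike.re ((W * diagonal (RCLike.ofReal ∘ d) * star W : Matrix n n 𝕜) i i) =
      (normSqEntries W *ᵥ d) i := by
  have hterm j : (W * diagonal (RCLike.ofReal ∘ d) : Matrix n n 𝕜) i j * star W j i =
      ((‖W i j‖ ^ 2 * d j : ℝ) : 𝕜) := by
    simp only [mul_diagonal, Function.comp_apply, star_apply, RCLike.star_def]
    push_cast
    rw [← RCLike.mul_conj]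
    ring
  rw [mul_apply, Finset.sum_congr rfl fun j _ => hterm j, ← RCLike.ofReal_sum, RCLike.ofReal_re]
  rfl

namespace IsHermitian

lemma trace_cfc {A : Matrix n n 𝕜} (hA : A.IsHermitian) (f : ℝ → ℝ) :
    (hA.cfc f).trace = ((∑ i, f (hA.eigenvalues i) : ℝ) : 𝕜) := by
  rw [IsHermitian.cfc, Unitary.conjStarAlgAut_apply, trace_mul_cycle,
    Unitary.coe_star_mul_self, one_mul, trace_diagonal, RCLike.ofReal_sum]
  rfl

lemma star_eigenvectorUnitary_mul_mul_apply_self {A : Matrix n n 𝕜} (hA : A.IsHermitian)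
    (i : n) :
    (star (hA.eigenvectorUnitary : Matrix n n 𝕜) * A * hA.eigenvectorUnitary) i i =
      hA.eigenvalues i := by
  have h := congr_fun₂ hA.conjStarAlgAut_star_eigenvectorUnitary i i
  rwa [Unitary.conjStarAlgAut_star_apply, diagonal_apply_eq] at h

lemma sum_map_re_diag_conj_le {A : Matrix n n 𝕜} (hA : A.IsHermitian) {s : Set ℝ}
    {f : ℝ → ℝ} (hf : ConvexOn ℝ s f) (hs : ∀ i, hA.eigenvalues i ∈ s) {U : Matrix n n 𝕜}
    (hU : U ∈ unitaryGroup n 𝕜) :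
    ∑ i, f (RCLike.re ((star U * A * U) i i)) ≤ ∑ i, f (hA.eigenvalues i) := by
  set W := star U * (hA.eigenvectorUnitary : Matrix n n 𝕜)
  have hconj : star U * A * U = W * diagonal (RCLike.ofReal ∘ hA.eigenvalues) * star W := by
    conv_lhs => rw [hA.spectral_theorem, Unitary.conjStarAlgAut_apply]
    simp only [W, star_mul, star_star, Matrix.mul_assoc]
  have hW : W ∈ unitaryGroup n 𝕜 := mul_mem (Unitary.star_mem hU) hA.eigenvectorUnitary.2
  simp only [hconj, re_mul_diagonal_mul_star_apply_self]
  exact hf.sum_map_mulVec_le (normSqEntries_mem_doublyStochastic hW) hs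

lemma sum_map_eigenvalues_le_of_eq_smul_add_smul {A B C : Matrix n n 𝕜} (hA : A.IsHermitian)
    (hB : B.IsHermitian) (hC : C.IsHermitian) {f : ℝ → ℝ} (hf : ConvexOn ℝ Set.univ f)
    {a b : ℝ} (ha : 0 ≤ a) (hb : 0 ≤ b) (hab : a + b = 1) (hC_eq : C = a • A + b • B) :
    ∑ i, f (hC.eigenvalues i) ≤
      a * ∑ i, f (hA.eigenvalues i) + b * ∑ i, f (hB.eigenvalues i) := by
  subst hC_eq
  set U : Matrix n n 𝕜 := (hC.eigenvectorUnitary : Matrix n n 𝕜)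
  have hU : U ∈ unitaryGroup n 𝕜 := hC.eigenvectorUnitary.2
  have hdiag i : hC.eigenvalues i =
      a * RCLike.re ((star U * A * U) i i) + b * RCLike.re ((star U * B * U) i i) := by
    have h := congr_arg RCLike.re (hC.star_eigenvectorUnitary_mul_mul_apply_self i)
    rw [RCLike.ofReal_re] at h
    rw [← h]
    simp only [U, Matrix.mul_add, Matrix.add_mul, Algebra.mul_smul_comm, Algebra.smul_mul_assoc,
      add_apply, smul_apply, map_add, RCLike.smul_re]
  calc ∑ i, f (hC.eigenvalues i)
      ≤ ∑ i, (a * f (RCLike.re ((star U * A * U) i i)) +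
          b * f (RCLike.re ((star U * B * U) i i))) := Finset.sum_le_sum fun i _ => by
        rw [hdiag i]
        exact hf.2 (Set.mem_univ _) (Set.mem_univ _) ha hb hab
    _ = a * ∑ i, f (RCLike.re ((star U * A * U) i i)) +
          b * ∑ i, f (RCLike.re ((star U * B * U) i i)) := by
        rw [Finset.sum_add_distrib, Finset.mul_sum, Finset.mul_sum]
    _ ≤ a * ∑ i, f (hA.eigenvalues i) + b * ∑ i, f (hB.eigenvalues i) := by
        gcongr a * ?_ + b * ?_
        · exact hA.sum_map_re_diag_conj_le hf (fun _ => Set.mem_univ _) hU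
        · exact hB.sum_map_re_diag_conj_le hf (fun _ => Set.mem_univ _) hU

end IsHermitian

end Matrix

end

/-- **Von Neumann-type trace inequality (2).** If `f` is convex and `A, B` are Hermitian,
then `Tr f((A+B)/2) ≤ Tr ((f(A)+f(B))/2)`. -/
theorem trace_cfc_mean_le
    {n : ℕ} (f : ℝ → ℝ) (hf : ConvexOn ℝ Set.univ f)
    (A B : Matrix (Fin n) (Fin n) ℂ) (hA : A.IsHermitian) (hB : B.IsHermitian) :
    ((isHermitian_half_smul (hA.add hB)).cfc f).trace ≤
      ((2 : ℝ)⁻¹ • (hA.cfc f + hB.cfc f)).trace := by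
  have key := hA.sum_map_eigenvalues_le_of_eq_smul_add_smul hB
    (isHermitian_half_smul (hA.add hB)) hf (by norm_num) (by norm_num) (by norm_num)
    (smul_add _ A B)
  rw [IsHermitian.trace_cfc, trace_smul, trace_add, IsHermitian.trace_cfc, IsHermitian.trace_cfc,
    RCLike.real_smul_eq_coe_mul, ← RCLike.ofReal_add, ← RCLike.ofReal_mul, mul_add]
  exact Complex.real_le_real.mpr key
end

section
/- Let f : ℝ → ℝ be a convex function which is monotone (either nondecreasing on all of ℝ or nonincreasing on all of ℝ) and let A, B be n×n Hermitian complex matrices. Then there exists an n×n unitary matrix U such that f((A+B)/2) ≤ U ((f(A)+f(B))/2) Uᴴ in the Loewner order. -/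
/-!
Write `C = (A + B) / 2` and `M = (f A + f B) / 2`. For a unit vector `x`, the numbers `⟨x, A x⟩`
and `⟨x, f(A) x⟩` are averages of the eigenvalues `λᵢ` of `A` and of the `f λᵢ` with the same
weights, so Jensen's inequality and midpoint convexity give `f ⟨x, C x⟩ ≤ ⟨x, M x⟩` (Bourin).
Monotonicity of `f` upgrades this to a comparison of sorted spectra: the `k`-th smallest value of
`f` on the spectrum of `C` is at most the `k`-th smallest eigenvalue of `M`, by testing on a unit
vector spanned both by the eigenvectors of `C` carrying the `n - k` largest values of `f ∘ λ(C)`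
and by the eigenvectors of `M` carrying its `k + 1` smallest eigenvalues, which exists for
dimension reasons. A unitary matching the two eigenbases in sorted order then conjugates `M`
above `f C`.
-/

open Matrix
open scoped ComplexOrder

open Finset

section WeightedMean

variable {ι : Type*} [Fintype ι] {s : Finset ι} {w p : ι → ℝ}

lemma sum_eq_one_of_eq_zero_of_notMem (hw₁ : ∑ i, w i = 1) (hws : ∀ i ∉ s, w i = 0) :
    ∑ i ∈ s, w i = 1 := by
  rwa [sum_subset (subset_univ s) fun i _ hi => hws i hi]

lemma centerMass_eq_sum_mul (hw₁ : ∑ i, w i = 1) (hws : ∀ i ∉ s, w i = 0) :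
    s.centerMass w p = ∑ i, w i * p i := by
  rw [centerMass_eq_of_sum_1 _ _ (sum_eq_one_of_eq_zero_of_notMem hw₁ hws)]
  exact sum_subset (subset_univ s) fun i _ hi => by rw [hws i hi, zero_smul]

lemma exists_mem_le_sum_mul (hw₀ : ∀ i, 0 ≤ w i) (hw₁ : ∑ i, w i = 1) (hws : ∀ i ∉ s, w i = 0) :
    ∃ i ∈ s, p i ≤ ∑ i, w i * p i := by
  rw [← centerMass_eq_sum_mul hw₁ hws]
  exact (concaveOn_id (convex_univ (𝕜 := ℝ))).exists_le_of_centerMass (fun i _ => hw₀ i)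
    ((sum_eq_one_of_eq_zero_of_notMem hw₁ hws).symm ▸ one_pos) fun _ _ => Set.mem_univ _

lemma exists_mem_sum_mul_le (hw₀ : ∀ i, 0 ≤ w i) (hw₁ : ∑ i, w i = 1) (hws : ∀ i ∉ s, w i = 0) :
    ∃ i ∈ s, ∑ i, w i * p i ≤ p i := by
  rw [← centerMass_eq_sum_mul hw₁ hws]
  exact (convexOn_id (convex_univ (𝕜 := ℝ))).exists_ge_of_centerMass (fun i _ => hw₀ i)
    ((sum_eq_one_of_eq_zero_of_notMem hw₁ hws).symm ▸ one_pos) fun _ _ => Set.mem_univ _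

lemma exists_mem_apply_le_apply_sum_mul (hw₀ : ∀ i, 0 ≤ w i) (hw₁ : ∑ i, w i = 1)
    (hws : ∀ i ∉ s, w i = 0) {g : ℝ → ℝ} (hg : Monotone g ∨ Antitone g) :
    ∃ i ∈ s, g (p i) ≤ g (∑ i, w i * p i) := by
  rcases hg with hg | hg
  · obtain ⟨i, hi, h⟩ := exists_mem_le_sum_mul hw₀ hw₁ hws
    exact ⟨i, hi, hg h⟩
  · obtain ⟨i, hi, h⟩ := exists_mem_sum_mul_le hw₀ hw₁ hws
    exact ⟨i, hi, hg h⟩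

end WeightedMean

variable {𝕜 ι : Type*} [RCLike 𝕜] [Fintype ι]

lemma Submodule.exists_mem_sum_norm_sq_eq_one {E : Submodule 𝕜 (ι → 𝕜)} (hE : E ≠ ⊥) :
    ∃ x ∈ E, ∑ i, ‖x i‖ ^ 2 = 1 := by
  obtain ⟨y, hyE, hy⟩ := (Submodule.ne_bot_iff E).mp hE
  have hpos : 0 < ∑ i, ‖y i‖ ^ 2 := by
    obtain ⟨i, hi⟩ := Function.ne_iff.mp hy
    exact sum_pos' (fun i _ => by positivity) ⟨i, mem_univ i, pow_pos (norm_pos_iff.mpr hi) 2⟩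
  refine ⟨(((√(∑ i, ‖y i‖ ^ 2))⁻¹ : ℝ) : 𝕜) • y, E.smul_mem _ hyE, ?_⟩
  simp only [Pi.smul_apply, norm_smul, mul_pow, ← mul_sum, RCLike.norm_ofReal, sq_abs, inv_pow,
    Real.sq_sqrt hpos.le]
  exact inv_mul_cancel₀ hpos.ne'

namespace Matrix

lemma exists_sum_norm_sq_eq_one_mulVec_eq_zero (P Q : Matrix ι ι 𝕜) {S T : Finset ι}
    (hST : Fintype.card ι < #S + #T) :
    ∃ x : ι → 𝕜, ∑ i, ‖x i‖ ^ 2 = 1 ∧ (∀ i ∉ S, (P *ᵥ x) i = 0) ∧ ∀ i ∉ T, (Q *ᵥ x) i = 0 := by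
  classical
  let L : (ι → 𝕜) →ₗ[𝕜] ((↥Sᶜ → 𝕜) × (↥Tᶜ → 𝕜)) :=
    (LinearMap.funLeft 𝕜 𝕜 Subtype.val ∘ₗ P.mulVecLin).prod
      (LinearMap.funLeft 𝕜 𝕜 Subtype.val ∘ₗ Q.mulVecLin)
  have hL : LinearMap.ker L ≠ ⊥ := LinearMap.ker_ne_bot_of_finrank_lt <| by
    simp only [Module.finrank_prod, Module.finrank_fintype_fun_eq_card, Fintype.card_coe,
      card_compl]
    have := S.card_le_univ
    have := T.card_le_univ
    omega
  obtain ⟨x, hxL, hx⟩ := Submodule.exists_mem_sum_norm_sq_eq_one hL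
  exact ⟨x, hx, fun i hi => congrFun (congrArg Prod.fst hxL) ⟨i, mem_compl.mpr hi⟩,
    fun i hi => congrFun (congrArg Prod.snd hxL) ⟨i, mem_compl.mpr hi⟩⟩

lemma re_star_dotProduct_self (x : ι → 𝕜) : RCLike.re (star x ⬝ᵥ x) = ∑ i, ‖x i‖ ^ 2 := by
  simp [dotProduct, RCLike.conj_mul]

lemma re_star_dotProduct_smul_add_mulVec (c : ℝ) (P Q : Matrix ι ι 𝕜) (x : ι → 𝕜) :
    RCLike.re (star x ⬝ᵥ ((c • (P + Q)) *ᵥ x)) =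
      c * RCLike.re (star x ⬝ᵥ (P *ᵥ x)) + c * RCLike.re (star x ⬝ᵥ (Q *ᵥ x)) := by
  simp [smul_mulVec, add_mulVec, dotProduct_add, dotProduct_smul, RCLike.smul_re]

variable [DecidableEq ι]

lemma re_star_dotProduct_conj_diagonal_mulVec (U : Matrix ι ι 𝕜) (ν : ι → ℝ) (x : ι → 𝕜) :
    RCLike.re (star x ⬝ᵥ ((U * diagonal (RCLike.ofReal ∘ ν) * star U) *ᵥ x)) =
      ∑ i, ‖(star U *ᵥ x) i‖ ^ 2 * ν i := by
  have hstar : star x ᵥ* U = star (star U *ᵥ x) := by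
    rw [star_mulVec, star_eq_conjTranspose, conjTranspose_conjTranspose]
  rw [← mulVec_mulVec, ← mulVec_mulVec, dotProduct_mulVec, hstar]
  simp only [dotProduct, mulVec_diagonal, Pi.star_apply, Function.comp_apply, RCLike.star_def,
    map_sum]
  refine sum_congr rfl fun i _ => ?_
  rw [mul_left_comm, RCLike.conj_mul, ← RCLike.ofReal_pow, ← RCLike.ofReal_mul, RCLike.ofReal_re,
    mul_comm]

lemma sum_norm_sq_star_mulVec {U : Matrix ι ι 𝕜} (hU : U ∈ unitaryGroup ι 𝕜) (x : ι → 𝕜) :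
    ∑ i, ‖(star U *ᵥ x) i‖ ^ 2 = ∑ i, ‖x i‖ ^ 2 := by
  have h := re_star_dotProduct_conj_diagonal_mulVec U 1 x
  simp only [Pi.one_apply, mul_one] at h
  rw [← h, ← re_star_dotProduct_self]
  simp [mem_unitaryGroup_iff.mp hU]

lemma submatrix_id_equiv_mem_unitaryGroup {W : Matrix ι ι 𝕜} (hW : W ∈ unitaryGroup ι 𝕜)
    (e : ι ≃ ι) : W.submatrix id e ∈ unitaryGroup ι 𝕜 := by
  rw [mem_unitaryGroup_iff, star_eq_conjTranspose, conjTranspose_submatrix,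
    submatrix_mul_equiv _ _ _ e, ← star_eq_conjTranspose, mem_unitaryGroup_iff.mp hW,
    submatrix_id_id]

lemma submatrix_id_equiv_mul_diagonal_mul_star (W : Matrix ι ι 𝕜) (e : ι ≃ ι) (μ : ι → 𝕜) :
    W.submatrix id e * diagonal (μ ∘ e) * star (W.submatrix id e) = W * diagonal μ * star W := by
  rw [← submatrix_diagonal_equiv, submatrix_mul_equiv _ _ _ e, star_eq_conjTranspose,
    conjTranspose_submatrix, submatrix_mul_equiv _ _ _ e, submatrix_id_id, star_eq_conjTranspose]

lemma exists_unitary_conj_mul_diagonal_mul_star {V W : Matrix ι ι 𝕜}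
    (hV : V ∈ unitaryGroup ι 𝕜) (hW : W ∈ unitaryGroup ι 𝕜) (μ : ι → 𝕜) (e : ι ≃ ι) :
    ∃ U ∈ unitaryGroup ι 𝕜,
      U * (W * diagonal μ * star W) * Uᴴ = V * diagonal (μ ∘ e) * star V := by
  have hWe := submatrix_id_equiv_mem_unitaryGroup hW e
  have h := mem_unitaryGroup_iff'.mp hWe
  refine ⟨V * star (W.submatrix id e), mul_mem hV (Unitary.star_mem hWe), ?_⟩
  rw [← submatrix_id_equiv_mul_diagonal_mul_star W e, ← star_eq_conjTranspose, star_mul, star_star]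
  simp only [Matrix.mul_assoc]
  rw [← Matrix.mul_assoc (star _) (W.submatrix id e), h, Matrix.one_mul,
    ← Matrix.mul_assoc (star _) (W.submatrix id e), h, Matrix.one_mul]

lemma posSemidef_mul_diagonal_mul_star_sub (V : Matrix ι ι 𝕜) {d e : ι → ℝ} (hde : d ≤ e) :
    (V * diagonal (RCLike.ofReal ∘ e) * star V -
      V * diagonal (RCLike.ofReal ∘ d) * star V).PosSemidef := by
  rw [← Matrix.sub_mul, ← Matrix.mul_sub, diagonal_sub]
  refine (PosSemidef.diagonal fun i => ?_).mul_mul_conjTranspose_same V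
  simpa only [Pi.sub_apply, Function.comp_apply, Pi.zero_apply, ← RCLike.ofReal_sub,
    RCLike.ofReal_nonneg, sub_nonneg] using hde i

namespace IsHermitian

section Jensen

variable {X : Matrix ι ι 𝕜} (hX : X.IsHermitian)
include hX

lemma re_star_dotProduct_cfc_mulVec_s19 (g : ℝ → ℝ) (x : ι → 𝕜) :
    RCLike.re (star x ⬝ᵥ (hX.cfc g *ᵥ x)) =
      ∑ i, ‖(star (hX.eigenvectorUnitary : Matrix ι ι 𝕜) *ᵥ x) i‖ ^ 2 * g (hX.eigenvalues i) :=
  re_star_dotProduct_conj_diagonal_mulVec _ _ _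

lemma re_star_dotProduct_mulVec (x : ι → 𝕜) :
    RCLike.re (star x ⬝ᵥ (X *ᵥ x)) =
      ∑ i, ‖(star (hX.eigenvectorUnitary : Matrix ι ι 𝕜) *ᵥ x) i‖ ^ 2 * hX.eigenvalues i := by
  conv_lhs => rw [hX.spectral_theorem]
  exact hX.re_star_dotProduct_cfc_mulVec_s19 id x

lemma apply_re_star_dotProduct_mulVec_le {f : ℝ → ℝ} (hf : ConvexOn ℝ Set.univ f)
    {x : ι → 𝕜} (hx : ∑ i, ‖x i‖ ^ 2 = 1) :
    f (RCLike.re (star x ⬝ᵥ (X *ᵥ x))) ≤ RCLike.re (star x ⬝ᵥ (hX.cfc f *ᵥ x)) := by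
  rw [hX.re_star_dotProduct_mulVec, hX.re_star_dotProduct_cfc_mulVec_s19]
  exact hf.map_sum_le (fun _ _ => by positivity)
    ((sum_norm_sq_star_mulVec hX.eigenvectorUnitary.2 x).trans hx) (fun _ _ => trivial)

end Jensen

lemma apply_re_star_dotProduct_midpoint_mulVec_le {A B : Matrix ι ι 𝕜} (hA : A.IsHermitian)
    (hB : B.IsHermitian) {f : ℝ → ℝ} (hf : ConvexOn ℝ Set.univ f) {x : ι → 𝕜}
    (hx : ∑ i, ‖x i‖ ^ 2 = 1) :
    f (RCLike.re (star x ⬝ᵥ (((2 : ℝ)⁻¹ • (A + B)) *ᵥ x))) ≤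
      RCLike.re (star x ⬝ᵥ (((2 : ℝ)⁻¹ • (hA.cfc f + hB.cfc f)) *ᵥ x)) := by
  rw [re_star_dotProduct_smul_add_mulVec, re_star_dotProduct_smul_add_mulVec]
  calc _ ≤ 2⁻¹ * f (RCLike.re (star x ⬝ᵥ (A *ᵥ x))) + 2⁻¹ * f (RCLike.re (star x ⬝ᵥ (B *ᵥ x))) :=
        hf.2 trivial trivial (by norm_num) (by norm_num) (by norm_num)
    _ ≤ _ := by
      gcongr
      exacts [hA.apply_re_star_dotProduct_mulVec_le hf hx,
        hB.apply_re_star_dotProduct_mulVec_le hf hx]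

section SortedSpectra

variable {n : ℕ} {C M : Matrix (Fin n) (Fin n) 𝕜} (hC : C.IsHermitian) (hM : M.IsHermitian)
  {f : ℝ → ℝ} (hf : Monotone f ∨ Antitone f)
  (h : ∀ x : Fin n → 𝕜, ∑ i, ‖x i‖ ^ 2 = 1 →
    f (RCLike.re (star x ⬝ᵥ (C *ᵥ x))) ≤ RCLike.re (star x ⬝ᵥ (M *ᵥ x)))
include hC hM hf h

lemma apply_eigenvalues_sort_le_eigenvalues_sort (k : Fin n) :
    f (hC.eigenvalues (Tuple.sort (f ∘ hC.eigenvalues) k)) ≤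
      hM.eigenvalues (Tuple.sort hM.eigenvalues k) := by
  set σ := Tuple.sort (f ∘ hC.eigenvalues)
  set τ := Tuple.sort hM.eigenvalues
  set V : Matrix (Fin n) (Fin n) 𝕜 := (hC.eigenvectorUnitary : Matrix (Fin n) (Fin n) 𝕜)
  set W : Matrix (Fin n) (Fin n) 𝕜 := (hM.eigenvectorUnitary : Matrix (Fin n) (Fin n) 𝕜)
  obtain ⟨x, hx, hxV, hxW⟩ := exists_sum_norm_sq_eq_one_mulVec_eq_zero (star V) (star W)
    (S := (Ici k).map σ.toEmbedding) (T := (Iic k).map τ.toEmbedding)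
    (by simp only [card_map, Fin.card_Ici, Fin.card_Iic, Fintype.card_fin]; omega)
  obtain ⟨i, hi, hfi⟩ := exists_mem_apply_le_apply_sum_mul (p := hC.eigenvalues)
    (fun _ => by positivity) ((sum_norm_sq_star_mulVec hC.eigenvectorUnitary.2 x).trans hx)
    (fun i hi => by rw [hxV i hi, norm_zero, sq, zero_mul]) hf
  obtain ⟨j, hj, hμj⟩ := exists_mem_sum_mul_le (p := hM.eigenvalues)
    (fun _ => by positivity) ((sum_norm_sq_star_mulVec hM.eigenvectorUnitary.2 x).trans hx)
    (fun i hi => by rw [hxW i hi, norm_zero, sq, zero_mul])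
  obtain ⟨l, hl, rfl⟩ := mem_map.mp hi
  obtain ⟨l', hl', rfl⟩ := mem_map.mp hj
  rw [← hC.re_star_dotProduct_mulVec] at hfi
  rw [← hM.re_star_dotProduct_mulVec] at hμj
  calc f (hC.eigenvalues (σ k)) ≤ f (hC.eigenvalues (σ l)) :=
        Tuple.monotone_sort (f ∘ hC.eigenvalues) (mem_Ici.mp hl)
    _ ≤ f (RCLike.re (star x ⬝ᵥ (C *ᵥ x))) := hfi
    _ ≤ RCLike.re (star x ⬝ᵥ (M *ᵥ x)) := h x hx
    _ ≤ hM.eigenvalues (τ l') := hμj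
    _ ≤ hM.eigenvalues (τ k) := Tuple.monotone_sort hM.eigenvalues (mem_Iic.mp hl')

lemma exists_perm_apply_eigenvalues_le :
    ∃ ρ : Equiv.Perm (Fin n), ∀ i, f (hC.eigenvalues i) ≤ hM.eigenvalues (ρ i) :=
  ⟨(Tuple.sort (f ∘ hC.eigenvalues)).symm.trans (Tuple.sort hM.eigenvalues), fun i => by
    simpa using hC.apply_eigenvalues_sort_le_eigenvalues_sort hM hf h
      ((Tuple.sort (f ∘ hC.eigenvalues)).symm i)⟩

theorem exists_unitary_cfc_le :
    ∃ U ∈ unitaryGroup (Fin n) 𝕜, (U * M * Uᴴ - hC.cfc f).PosSemidef := by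
  obtain ⟨ρ, hρ⟩ := hC.exists_perm_apply_eigenvalues_le hM hf h
  obtain ⟨U, hU, hUM⟩ := exists_unitary_conj_mul_diagonal_mul_star hC.eigenvectorUnitary.2
    hM.eigenvectorUnitary.2 (RCLike.ofReal ∘ hM.eigenvalues) ρ
  refine ⟨U, hU, ?_⟩
  rw [hM.spectral_theorem, Unitary.conjStarAlgAut_apply, hUM, IsHermitian.cfc,
    Unitary.conjStarAlgAut_apply]
  exact posSemidef_mul_diagonal_mul_star_sub _ hρ

end SortedSpectra

end IsHermitian

end Matrix

/-- **Inequality (3) of Bourin.** If `f` is convex and monotone and `A, B` are Hermitian,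
then there is a unitary `U` with `f((A+B)/2) ≤ U ((f(A)+f(B))/2) Uᴴ` in the Loewner
order. -/
theorem cfc_mean_le_unitary_conj_of_monotone
    {n : ℕ} (f : ℝ → ℝ) (hf : ConvexOn ℝ Set.univ f)
    (hmono : Monotone f ∨ Antitone f)
    (A B : Matrix (Fin n) (Fin n) ℂ) (hA : A.IsHermitian) (hB : B.IsHermitian) :
    ∃ U : Matrix (Fin n) (Fin n) ℂ, U ∈ Matrix.unitaryGroup (Fin n) ℂ ∧
      (U * ((2 : ℝ)⁻¹ • (hA.cfc f + hB.cfc f)) * Uᴴ -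
        (isHermitian_half_smul (hA.add hB)).cfc f).PosSemidef :=
  (isHermitian_half_smul (hA.add hB)).exists_unitary_cfc_le
    (isHermitian_half_smul ((isHermitian_cfc hA f).add (isHermitian_cfc hB f))) hmono
    fun _ hx => hA.apply_re_star_dotProduct_midpoint_mulVec_le hB hf hx
end
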